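/- Consider the discrete-time quantum walk search on the n×n torus grid (N = n² vertices). The state space consists of functions ψ : (Fin n × Fin n × Fin 4) → ℂ, with coin directions labelled ↑,↓,←,→. Suppose the marked set is M = {(i,j), (i+1,j)} (indices mod n, so the two vertices are horizontally adjacent), with n ≥ 3. Let φ be the state whose amplitude is a at every basis state |x,y,c⟩ except |i,j,→⟩ and |i+1,j,←⟩, which both have amplitude −3a; i.e. φ = a·Σ_{x,y,c}|x,y,c⟩ − 4a|i,j,→⟩ − 4a|i+1,j,←⟩. Then φ is fixed by one step of the search algorithm: U′φ = φ, where U′ = S·(I⊗C)·(Q⊗I). -/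

import Mathlib

/-- Discrete-time quantum walk search on the `n × n` torus grid.
Basis states are `((x, y), c)` with coin directions `0 = ↑`, `1 = ↓`, `2 = ←`, `3 = →`.
`flip` sends a dart to the reversed dart at the adjacent vertex (flip-flop structure). -/
noncomputable def GridWalk.flip (n : ℕ) [NeZero n] (e : (Fin n × Fin n) × Fin 4) :
    (Fin n × Fin n) × Fin 4 :=
  if e.2 = 0 then ((e.1.1, e.1.2 + 1), 1)
  else if e.2 = 1 then ((e.1.1, e.1.2 - 1), 0)
  else if e.2 = 2 then ((e.1.1 - 1, e.1.2), 3)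
  else ((e.1.1 + 1, e.1.2), 2)

/-- The flip-flop shift operator `S`. -/
noncomputable def GridWalk.shift (n : ℕ) [NeZero n] (ψ : (Fin n × Fin n) × Fin 4 → ℂ) :
    (Fin n × Fin n) × Fin 4 → ℂ :=
  fun e => ψ (GridWalk.flip n e)

/-- The Grover coin `I ⊗ C`. -/
noncomputable def GridWalk.coin (n : ℕ) (ψ : (Fin n × Fin n) × Fin 4 → ℂ) :
    (Fin n × Fin n) × Fin 4 → ℂ :=
  fun e => (1 / 2 : ℂ) * (∑ c' : Fin 4, ψ (e.1, c')) - ψ e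

/-- The query `Q ⊗ I`, flipping the sign at marked vertices. -/
noncomputable def GridWalk.query (n : ℕ) (M : Finset (Fin n × Fin n))
    (ψ : (Fin n × Fin n) × Fin 4 → ℂ) : (Fin n × Fin n) × Fin 4 → ℂ :=
  fun e => if e.1 ∈ M then -ψ e else ψ e

/-- One step of the search algorithm, `U' = S · (I ⊗ C) · (Q ⊗ I)`. -/
noncomputable def GridWalk.step (n : ℕ) [NeZero n] (M : Finset (Fin n × Fin n))
    (ψ : (Fin n × Fin n) × Fin 4 → ℂ) : (Fin n × Fin n) × Fin 4 → ℂ :=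
  GridWalk.shift n (GridWalk.coin n (GridWalk.query n M ψ))

/-!
At a vertex where the amplitudes sum to zero the Grover coin acts as `-1`, which the query
undoes at a marked vertex; at a vertex where they are constant it acts as `+1`. The state
with `-3a` on both darts of the edge joining the two marked vertices and `a` elsewhere has
amplitudes `a, a, a, -3a` at each marked vertex and constant ones elsewhere, so query and
coin fix it. The shift permutes the darts by the involution `flip`, which swaps the two
darts of that edge, so it fixes the state as well.
-/

namespace GridWalk

variable {n : ℕ}

theorem flip_involutive [NeZero n] : Function.Involutive (flip n) := by
  rintro ⟨⟨x, y⟩, c⟩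
  fin_cases c <;> simp [flip]

noncomputable def edgeState (n : ℕ) [NeZero n] (d : (Fin n × Fin n) × Fin 4) (a b : ℂ) :
    (Fin n × Fin n) × Fin 4 → ℂ :=
  fun e => if e = d ∨ e = flip n d then b else a

theorem edgeState_flip [NeZero n] (d : (Fin n × Fin n) × Fin 4) (a b : ℂ) :
    edgeState n (flip n d) a b = edgeState n d a b := by
  funext e
  simp only [edgeState, flip_involutive d, or_comm]

theorem shift_edgeState [NeZero n] (d : (Fin n × Fin n) × Fin 4) (a b : ℂ) :
    shift n (edgeState n d a b) = edgeState n d a b := by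
  funext e
  simp only [shift, edgeState, flip_involutive.injective.eq_iff, flip_involutive.eq_iff, or_comm]

theorem coin_query_eq_self (M : Finset (Fin n × Fin n)) (ψ : (Fin n × Fin n) × Fin 4 → ℂ)
    (h_marked : ∀ v ∈ M, ∑ c, ψ (v, c) = 0)
    (h_unmarked : ∀ v ∉ M, ∀ c c', ψ (v, c) = ψ (v, c')) :
    coin n (query n M ψ) = ψ := by
  funext ⟨v, c⟩
  by_cases hv : v ∈ M
  · simp [coin, query, hv, Finset.sum_neg_distrib, h_marked v hv]
  · simp only [coin, query, hv, if_false, Finset.sum_congr rfl fun c' _ => h_unmarked v hv c' c]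
    simp only [Finset.sum_const, Finset.card_univ, Fintype.card_fin, nsmul_eq_mul]
    ring

theorem sum_edgeState_fst [NeZero n] (d : (Fin n × Fin n) × Fin 4) (a : ℂ)
    (hd : (flip n d).1 ≠ d.1) : ∑ c, edgeState n d a (-3 * a) (d.1, c) = 0 := by
  have hflip (c : Fin 4) : (d.1, c) ≠ flip n d := fun h => hd (congrArg Prod.fst h).symm
  have hd' (c : Fin 4) : (d.1, c) = d ↔ c = d.2 := by simp [Prod.ext_iff]
  simp only [edgeState, hflip, or_false, hd', Fin.sum_univ_four]
  generalize d.2 = c₀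
  fin_cases c₀ <;> simp <;> ring

theorem edgeState_of_ne [NeZero n] (d : (Fin n × Fin n) × Fin 4) (a b : ℂ)
    {v : Fin n × Fin n} (hv : v ≠ d.1) (hv' : v ≠ (flip n d).1) (c : Fin 4) :
    edgeState n d a b (v, c) = a :=
  if_neg fun h => h.elim (fun h => hv (congrArg Prod.fst h)) fun h => hv' (congrArg Prod.fst h)

theorem step_edgeState [NeZero n] (d : (Fin n × Fin n) × Fin 4) (a : ℂ)
    (hd : (flip n d).1 ≠ d.1) :
    step n {d.1, (flip n d).1} (edgeState n d a (-3 * a)) = edgeState n d a (-3 * a) := by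
  rw [step, coin_query_eq_self, shift_edgeState]
  · simp only [Finset.mem_insert, Finset.mem_singleton]
    rintro v (rfl | rfl)
    · exact sum_edgeState_fst d a hd
    · rw [← edgeState_flip]
      refine sum_edgeState_fst (flip n d) a ?_
      rw [flip_involutive d]
      exact hd.symm
  · simp only [Finset.mem_insert, Finset.mem_singleton, not_or]
    rintro v ⟨hv, hv'⟩ c c'
    rw [edgeState_of_ne d a _ hv hv', edgeState_of_ne d a _ hv hv']

end GridWalk

theorem grid_two_adjacent_marked_stationary (n : ℕ) [NeZero n] (hn : 3 ≤ n)
    (i j : Fin n) (a : ℂ) :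
    GridWalk.step n {(i, j), (i + 1, j)}
      (fun e => if e = ((i, j), (3 : Fin 4)) ∨ e = ((i + 1, j), (2 : Fin 4))
        then -3 * a else a)
    = fun e => if e = ((i, j), (3 : Fin 4)) ∨ e = ((i + 1, j), (2 : Fin 4))
        then -3 * a else a := by
  have hloop : (i + 1, j) ≠ (i, j) := by simp; omega
  exact GridWalk.step_edgeState ((i, j), 3) a hloop
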